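/- Let S₀ = {x ∈ ℝ² : ‖x − K‖ ≤ 1, ‖x − L‖ ≤ 1, x₂ ≥ 0}, where K = (0,0) and L = (1,0), and let D = closedBall((1/2, 0), 1/2). Then the ratio of the Lebesgue measure of S₀ \ D to the Lebesgue measure of S₀ equals (5π − 6√3)/(8π − 6√3). -/

import Mathlib

/-!
In the coordinates `(x 0, x 1)` the mixed triangle is the region over `[0, 1]` under the lower of
the two unit semicircles about `K` and `L`: a lens made of two circular segments of area
`π/6 - √3/8` each. The part of `D` inside the mixed triangle is the upper half of `D`, of area
`π/8`. Hence `μ(S₀) = (π/3 - √3/4 - π/8) / (π/3 - √3/4)`.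
-/

open MeasureTheory Real

noncomputable def pt (a b : ℝ) : EuclideanSpace ℝ (Fin 2) :=
  (WithLp.equiv 2 (Fin 2 → ℝ)).symm ![a, b]

open Set

section regionBetween

variable {α : Type*} [MeasurableSpace α] {μ : Measure α} {f g : α → ℝ} {s : Set α}

theorem volume_region_between_cc_eq_lintegral (hf : Measurable f) (hg : Measurable g)
    (hs : MeasurableSet s) :
    μ.prod volume {p : α × ℝ | p.1 ∈ s ∧ p.2 ∈ Icc (f p.1) (g p.1)} =
      ∫⁻ x in s, ENNReal.ofReal (g x - f x) ∂μ := by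
  rw [Measure.prod_apply (measurableSet_region_between_cc hf hg hs), ← lintegral_indicator hs]
  congr 1 with x
  by_cases hx : x ∈ s
  · rw [indicator_of_mem hx, ← Real.volume_Icc]
    congr 1 with y
    simp [hx]
  · simp [hx]

end regionBetween

theorem volume_region_under_eq_integral {g : ℝ → ℝ} {a b : ℝ} (hab : a ≤ b) (hg : Continuous g)
    (hg₀ : ∀ x ∈ Icc a b, 0 ≤ g x) :
    volume {p : ℝ × ℝ | p.1 ∈ Icc a b ∧ p.2 ∈ Icc 0 (g p.1)} =
      ENNReal.ofReal (∫ x in a..b, g x) := by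
  rw [Measure.volume_eq_prod, volume_region_between_cc_eq_lintegral measurable_const
      hg.measurable measurableSet_Icc, intervalIntegral.integral_of_le hab,
    ← integral_Icc_eq_integral_Ioc, ofReal_integral_eq_lintegral_ofReal
      hg.integrableOn_Icc ((ae_restrict_iff' measurableSet_Icc).mpr (.of_forall hg₀))]
  simp_rw [sub_zero]

theorem integral_sqrt_one_sub_sq_sin {a b : ℝ} (ha : -(π / 2) ≤ a) (hab : a ≤ b)
    (hb : b ≤ π / 2) :
    ∫ x in sin a..sin b, √(1 - x ^ 2) = (cos b * sin b - cos a * sin a + b - a) / 2 := by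
  rw [← integral_cos_sq, ← intervalIntegral.integral_comp_mul_deriv
    (fun x _ => hasDerivAt_sin x) continuousOn_cos (by fun_prop)]
  refine intervalIntegral.integral_congr fun x hx => ?_
  rw [uIcc_of_le hab] at hx
  rw [Function.comp_apply, ← cos_eq_sqrt_one_sub_sin_sq (ha.trans hx.1) (hx.2.trans hb), sq]

noncomputable def circleHeight (c r x : ℝ) : ℝ := √(r ^ 2 - (x - c) ^ 2)

theorem continuous_circleHeight (c r : ℝ) : Continuous (circleHeight c r) := by
  unfold circleHeight; fun_prop

theorem integral_circleHeight (c : ℝ) {r : ℝ} (hr : 0 < r) :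
    ∫ x in c - r..c + r, circleHeight c r x = π * r ^ 2 / 2 := by
  have hscale : ∀ x, circleHeight c r x = r * √(1 - (x / r - c / r) ^ 2) := by
    intro x
    rw [circleHeight, show r ^ 2 - (x - c) ^ 2 = r ^ 2 * (1 - (x / r - c / r) ^ 2) by
      field_simp, sqrt_mul (sq_nonneg r), sqrt_sq hr.le]
  simp_rw [hscale]
  rw [intervalIntegral.integral_const_mul,
    intervalIntegral.integral_comp_div_sub (f := fun y => √(1 - y ^ 2)) hr.ne']
  have h1 : (c - r) / r - c / r = -1 := by field_simp; ring
  have h2 : (c + r) / r - c / r = 1 := by field_simp; ring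
  rw [h1, h2, integral_sqrt_one_sub_sq, smul_eq_mul]
  ring

theorem integral_circleHeight_zero_one_half_one :
    ∫ x in (1 / 2 : ℝ)..1, circleHeight 0 1 x = π / 6 - √3 / 8 := by
  have h := integral_sqrt_one_sub_sq_sin (a := π / 6) (b := π / 2) (by linarith [pi_pos])
    (by linarith [pi_pos]) le_rfl
  rw [sin_pi_div_six, sin_pi_div_two, cos_pi_div_two, cos_pi_div_six] at h
  simp only [circleHeight, one_pow, sub_zero]
  rw [h]
  ring

noncomputable def lensHeight (x : ℝ) : ℝ := min (circleHeight 0 1 x) (circleHeight 1 1 x)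

theorem continuous_lensHeight : Continuous lensHeight :=
  (continuous_circleHeight 0 1).min (continuous_circleHeight 1 1)

theorem integral_lensHeight : ∫ x in (0 : ℝ)..1, lensHeight x = π / 3 - √3 / 4 := by
  have hleft : ∫ x in (0 : ℝ)..(1 / 2), lensHeight x = π / 6 - √3 / 8 := by
    -- on `[0, 1/2]` the lower semicircle is the one about `L`, the mirror image of that about `K`
    calc ∫ x in (0 : ℝ)..(1 / 2), lensHeight x
        = ∫ x in (0 : ℝ)..(1 / 2), circleHeight 0 1 (1 - x) := by
          refine intervalIntegral.integral_congr fun x hx => ?_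
          rw [uIcc_of_le (by norm_num)] at hx
          simp only [lensHeight, circleHeight]
          rw [min_eq_right (sqrt_le_sqrt (by nlinarith [hx.1, hx.2]))]
          ring_nf
      _ = π / 6 - √3 / 8 := by
          rw [intervalIntegral.integral_comp_sub_left (circleHeight 0 1)]
          norm_num [integral_circleHeight_zero_one_half_one]
  have hright : ∫ x in (1 / 2 : ℝ)..1, lensHeight x = π / 6 - √3 / 8 := by
    rw [← integral_circleHeight_zero_one_half_one]
    refine intervalIntegral.integral_congr fun x hx => ?_
    rw [uIcc_of_le (by norm_num)] at hx
    exact min_eq_left (sqrt_le_sqrt (by nlinarith [hx.1, hx.2]))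
  rw [← intervalIntegral.integral_add_adjacent_intervals
    (continuous_lensHeight.intervalIntegrable _ _) (continuous_lensHeight.intervalIntegrable _ _),
    hleft, hright]
  ring

def planeCoords (x : EuclideanSpace ℝ (Fin 2)) : ℝ × ℝ := (x 0, x 1)

theorem measurePreserving_planeCoords : MeasurePreserving planeCoords :=
  (volume_preserving_finTwoArrow ℝ).comp (PiLp.volume_preserving_ofLp (Fin 2))

theorem norm_sub_pt_le_iff (x : EuclideanSpace ℝ (Fin 2)) (a b : ℝ) {r : ℝ} (hr : 0 ≤ r) :
    ‖x - pt a b‖ ≤ r ↔ (x 0 - a) ^ 2 + (x 1 - b) ^ 2 ≤ r ^ 2 := by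
  rw [← sq_le_sq₀ (norm_nonneg _) hr, EuclideanSpace.real_norm_sq_eq]
  simp [Fin.sum_univ_two, pt]

theorem norm_sub_pt_le_iff_le_circleHeight {x : EuclideanSpace ℝ (Fin 2)} (c : ℝ) {r : ℝ}
    (hr : 0 ≤ r) (hy : 0 ≤ x 1) :
    ‖x - pt c 0‖ ≤ r ↔ x 0 ∈ Icc (c - r) (c + r) ∧ x 1 ≤ circleHeight c r (x 0) := by
  have hx : x 0 ∈ Icc (c - r) (c + r) ↔ (x 0 - c) ^ 2 ≤ r ^ 2 := by
    rw [sq_le_sq, abs_of_nonneg hr, abs_le, mem_Icc]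
    constructor <;> rintro ⟨_, _⟩ <;> constructor <;> linarith
  rw [norm_sub_pt_le_iff x c 0 hr, sub_zero, hx, circleHeight]
  constructor
  · intro h
    exact ⟨by nlinarith, (le_sqrt hy (by nlinarith)).2 (by linarith)⟩
  · rintro ⟨h, hle⟩
    have := (le_sqrt hy (by linarith)).1 hle
    linarith

def upperHalfDisk (c r : ℝ) : Set (EuclideanSpace ℝ (Fin 2)) :=
  {x | ‖x - pt c 0‖ ≤ r ∧ 0 ≤ x 1}

def mixedTriangle : Set (EuclideanSpace ℝ (Fin 2)) :=
  {x | ‖x - pt 0 0‖ ≤ 1 ∧ ‖x - pt 1 0‖ ≤ 1 ∧ 0 ≤ x 1}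

theorem upperHalfDisk_eq_preimage (c : ℝ) {r : ℝ} (hr : 0 ≤ r) :
    upperHalfDisk c r =
      planeCoords ⁻¹' {p | p.1 ∈ Icc (c - r) (c + r) ∧ p.2 ∈ Icc 0 (circleHeight c r p.1)} := by
  ext x
  simp only [upperHalfDisk, mem_ofPred_eq, mem_preimage, planeCoords, mem_Icc]
  constructor
  · rintro ⟨h, hy⟩
    obtain ⟨hx, hle⟩ := (norm_sub_pt_le_iff_le_circleHeight c hr hy).1 h
    exact ⟨hx, hy, hle⟩
  · rintro ⟨hx, hy, hle⟩
    exact ⟨(norm_sub_pt_le_iff_le_circleHeight c hr hy).2 ⟨hx, hle⟩, hy⟩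

theorem mixedTriangle_eq_preimage :
    mixedTriangle =
      planeCoords ⁻¹' {p | p.1 ∈ Icc 0 1 ∧ p.2 ∈ Icc 0 (lensHeight p.1)} := by
  ext x
  simp only [mixedTriangle, mem_ofPred_eq, mem_preimage, planeCoords, mem_Icc]
  constructor
  · rintro ⟨hK, hL, hy⟩
    obtain ⟨⟨-, hK₁⟩, hleK⟩ := (norm_sub_pt_le_iff_le_circleHeight 0 zero_le_one hy).1 hK
    obtain ⟨⟨hL₀, -⟩, hleL⟩ := (norm_sub_pt_le_iff_le_circleHeight 1 zero_le_one hy).1 hL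
    exact ⟨⟨by linarith, by linarith⟩, hy, le_min hleK hleL⟩
  · rintro ⟨⟨hx₀, hx₁⟩, hy, hle⟩
    refine ⟨(norm_sub_pt_le_iff_le_circleHeight 0 zero_le_one hy).2 ⟨⟨?_, ?_⟩, ?_⟩,
      (norm_sub_pt_le_iff_le_circleHeight 1 zero_le_one hy).2 ⟨⟨?_, ?_⟩, ?_⟩, hy⟩
    all_goals first
      | linarith
      | exact hle.trans (min_le_left _ _)
      | exact hle.trans (min_le_right _ _)

theorem volume_preimage_planeCoords_region_under {g : ℝ → ℝ} {a b : ℝ} (hab : a ≤ b)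
    (hg : Continuous g) (hg₀ : ∀ x ∈ Icc a b, 0 ≤ g x) :
    volume (planeCoords ⁻¹' {p | p.1 ∈ Icc a b ∧ p.2 ∈ Icc 0 (g p.1)}) =
      ENNReal.ofReal (∫ x in a..b, g x) := by
  rw [measurePreserving_planeCoords.measure_preimage (measurableSet_region_between_cc
      measurable_const hg.measurable measurableSet_Icc).nullMeasurableSet,
    volume_region_under_eq_integral hab hg hg₀]

theorem volume_upperHalfDisk (c : ℝ) {r : ℝ} (hr : 0 < r) :
    volume (upperHalfDisk c r) = ENNReal.ofReal (π * r ^ 2 / 2) := by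
  rw [upperHalfDisk_eq_preimage c hr.le, volume_preimage_planeCoords_region_under (by linarith)
    (continuous_circleHeight c r) (fun _ _ => sqrt_nonneg _), integral_circleHeight c hr]

theorem volume_mixedTriangle : volume mixedTriangle = ENNReal.ofReal (π / 3 - √3 / 4) := by
  rw [mixedTriangle_eq_preimage, volume_preimage_planeCoords_region_under zero_le_one
    continuous_lensHeight (fun _ _ => le_min (sqrt_nonneg _) (sqrt_nonneg _)), integral_lensHeight]

theorem measurableSet_upperHalfDisk (c r : ℝ) : MeasurableSet (upperHalfDisk c r) :=
  (measurableSet_le (f := fun x => ‖x - pt c 0‖) (by fun_prop) measurable_const).inter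
    (measurableSet_le (g := fun x : EuclideanSpace ℝ (Fin 2) => x 1) measurable_const (by fun_prop))

theorem upperHalfDisk_subset_mixedTriangle : upperHalfDisk (1 / 2) (1 / 2) ⊆ mixedTriangle := by
  rintro x ⟨hm, hy⟩
  rw [norm_sub_pt_le_iff x _ _ (by norm_num)] at hm
  refine ⟨?_, ?_, hy⟩ <;> rw [norm_sub_pt_le_iff x _ _ zero_le_one] <;> nlinarith

theorem mixedTriangle_diff_closedBall :
    mixedTriangle \ Metric.closedBall (pt (1 / 2) 0) (1 / 2) =
      mixedTriangle \ upperHalfDisk (1 / 2) (1 / 2) := by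
  ext x
  simp only [mem_sdiff, Metric.mem_closedBall, dist_eq_norm, upperHalfDisk, mem_ofPred_eq]
  constructor
  · rintro ⟨hx, hm⟩
    exact ⟨hx, fun h => hm h.1⟩
  · rintro ⟨hx, hm⟩
    exact ⟨hx, fun h => hm ⟨h, hx.2.2⟩⟩

theorem mixed_triangle_exterior_ratio :
    volume ({x : EuclideanSpace ℝ (Fin 2) |
        ‖x - pt 0 0‖ ≤ 1 ∧ ‖x - pt 1 0‖ ≤ 1 ∧ 0 ≤ x 1} \
        Metric.closedBall (pt (1/2) 0) (1/2)) /
      volume {x : EuclideanSpace ℝ (Fin 2) |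
        ‖x - pt 0 0‖ ≤ 1 ∧ ‖x - pt 1 0‖ ≤ 1 ∧ 0 ≤ x 1} =
      ENNReal.ofReal ((5 * π - 6 * Real.sqrt 3) / (8 * π - 6 * Real.sqrt 3)) := by
  change volume (mixedTriangle \ _) / volume mixedTriangle = _
  have hdisk := volume_upperHalfDisk (1 / 2) (by norm_num : (0 : ℝ) < 1 / 2)
  have hsqrt3 : √3 < 2 := by rw [sqrt_lt' two_pos]; norm_num
  have hlens : 0 < π / 3 - √3 / 4 := by linarith [pi_gt_three]
  have hden : 0 < 8 * π - 6 * √3 := by linarith [pi_gt_three]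
  rw [mixedTriangle_diff_closedBall, measure_sdiff upperHalfDisk_subset_mixedTriangle
      (measurableSet_upperHalfDisk _ _).nullMeasurableSet (hdisk ▸ ENNReal.ofReal_ne_top),
    volume_mixedTriangle, hdisk, ← ENNReal.ofReal_sub _ (by positivity),
    ← ENNReal.ofReal_div_of_pos hlens]
  congr 1
  rw [div_eq_div_iff hlens.ne' hden.ne']
  ring
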